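/- arXiv:2102.11404 — 2 statements merged into one kernel-verified Lean document; each statement's English description precedes it below -/
import Mathlib

section
/- Let g : ℝ → ℂ be a function such that for every natural number N there is a constant C_N with |g(x)| ≤ C_N (1 + |x|)^{−N} for all x. Then for every natural number l and every real s, sin(θ)^s · g(cot θ) = o(θ^l) as θ → 0⁺; in particular lim_{θ→0⁺} θ^{−l} sin(θ)^s g(cot θ) = 0. -/
theorem stmt7 (g : ℝ → ℂ)
    (hg : ∀ N : ℕ, ∃ C : ℝ, ∀ x : ℝ, ‖g x‖ ≤ C / (1 + |x|) ^ N)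
    (l : ℕ) (s : ℝ) :
    Filter.Tendsto
      (fun θ : ℝ =>
        ((Real.sin θ ^ s : ℝ) : ℂ) * g (Real.cos θ / Real.sin θ) / (θ : ℂ) ^ l)
      (nhdsWithin 0 (Set.Ioi 0)) (nhds 0) := by
  set N : ℕ := l + ⌈|s|⌉₊ + 1 with hN
  obtain ⟨C, hC⟩ := hg N
  have hC0 : 0 ≤ C := by
    have h := hC 0
    simp only [abs_zero, add_zero, one_pow, div_one] at h
    exact le_trans (norm_nonneg _) h
  set ε : ℝ := s + N - l with hε
  have hεpos : 0 < ε := by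
    have h1 : (|s| : ℝ) ≤ ⌈|s|⌉₊ := Nat.le_ceil _
    have h2 : -s ≤ |s| := neg_le_abs s
    have : (N : ℝ) = l + ⌈|s|⌉₊ + 1 := by push_cast [hN]; ring
    rw [hε, this]; linarith
  set K : ℝ := 2 ^ |s| * (C * 2 ^ N) with hK
  have hlim : Filter.Tendsto (fun θ : ℝ => K * θ ^ ε)
      (nhdsWithin 0 (Set.Ioi 0)) (nhds 0) := by
    have h : Filter.Tendsto (fun θ : ℝ => θ ^ ε) (nhds 0) (nhds ((0:ℝ) ^ ε)) :=
      (Real.continuousAt_rpow_const 0 ε (Or.inr hεpos.le)).tendsto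
    rw [Real.zero_rpow hεpos.ne'] at h
    have h2 : Filter.Tendsto (fun θ : ℝ => K * θ ^ ε) (nhds 0) (nhds (K * 0)) :=
      h.const_mul K
    rw [mul_zero] at h2
    exact h2.mono_left nhdsWithin_le_nhds
  apply squeeze_zero_norm' _ hlim
  filter_upwards [Ioo_mem_nhdsGT_of_mem (Set.left_mem_Ico.2 one_pos)] with θ hθ
  obtain ⟨hθ0, hθ1⟩ := hθ
  have hsinpos : 0 < Real.sin θ := Real.sin_pos_of_pos_of_lt_pi hθ0
    (lt_trans hθ1 (by linarith [Real.pi_gt_three]))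
  have hsinle : Real.sin θ ≤ θ := Real.sin_le hθ0.le
  have hsinge : θ / 2 ≤ Real.sin θ := by
    have h2 : θ ≤ Real.pi / 2 := by linarith [Real.pi_gt_three]
    have h3 := Real.mul_le_sin hθ0.le h2
    have hhalf : (1:ℝ)/2 ≤ 2 / Real.pi := by
      rw [div_le_div_iff₀ (by norm_num) Real.pi_pos]
      linarith [Real.pi_lt_d2]
    nlinarith [Real.pi_pos]
  have hcos : (1:ℝ)/2 ≤ Real.cos θ := by
    have := Real.one_sub_sq_div_two_le_cos (x := θ)
    nlinarith
  have hcot : 1 / (2 * θ) ≤ |Real.cos θ / Real.sin θ| := by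
    rw [abs_of_pos (div_pos (by linarith) hsinpos)]
    rw [div_le_div_iff₀ (by linarith) hsinpos]
    nlinarith
  -- bound on g
  have hgb : ‖g (Real.cos θ / Real.sin θ)‖ ≤ C * 2 ^ N * θ ^ N := by
    refine (hC _).trans ?_
    have h1 : 1 / (2 * θ) ≤ 1 + |Real.cos θ / Real.sin θ| := by
      have := abs_nonneg (Real.cos θ / Real.sin θ)
      linarith
    have hpos : (0:ℝ) < 1 / (2 * θ) := by positivity
    have hpow : (1 / (2 * θ)) ^ N ≤ (1 + |Real.cos θ / Real.sin θ|) ^ N :=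
      pow_le_pow_left₀ hpos.le h1 N
    calc C / (1 + |Real.cos θ / Real.sin θ|) ^ N
        ≤ C / (1 / (2 * θ)) ^ N := by
          apply div_le_div_of_nonneg_left hC0 (by positivity) hpow
      _ = C * 2 ^ N * θ ^ N := by
          rw [div_pow, one_pow, mul_pow]
          field_simp
  -- bound on sin^s
  have hsins : Real.sin θ ^ s ≤ 2 ^ |s| * θ ^ s := by
    rcases le_or_gt 0 s with hs | hs
    · have h1 : Real.sin θ ^ s ≤ θ ^ s := Real.rpow_le_rpow hsinpos.le hsinle hs
      have h2 : (1:ℝ) ≤ 2 ^ |s| := Real.one_le_rpow one_le_two (abs_nonneg s)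
      nlinarith [Real.rpow_nonneg hθ0.le s]
    · have h1 : Real.sin θ ^ s ≤ (θ / 2) ^ s :=
        Real.rpow_le_rpow_of_nonpos (by linarith) hsinge hs.le
      have h2 : (θ / 2) ^ s = 2 ^ (-s) * θ ^ s := by
        rw [Real.div_rpow hθ0.le (by norm_num), Real.rpow_neg (by norm_num)]
        field_simp
      rw [abs_of_neg hs]
      rw [h2] at h1; exact h1
  -- norm computation
  have hnorm : ‖((Real.sin θ ^ s : ℝ) : ℂ) * g (Real.cos θ / Real.sin θ) / (θ : ℂ) ^ l‖
      = Real.sin θ ^ s * ‖g (Real.cos θ / Real.sin θ)‖ / θ ^ l := by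
    rw [norm_div, norm_mul, norm_pow, Complex.norm_real, Complex.norm_real,
      Real.norm_eq_abs, Real.norm_eq_abs,
      abs_of_pos (Real.rpow_pos_of_pos hsinpos s), abs_of_pos hθ0]
  rw [hnorm]
  have hθl : (0:ℝ) < θ ^ l := pow_pos hθ0 l
  have step : Real.sin θ ^ s * ‖g (Real.cos θ / Real.sin θ)‖ / θ ^ l
      ≤ (2 ^ |s| * θ ^ s) * (C * 2 ^ N * θ ^ N) / θ ^ l := by
    gcongr
    all_goals first | exact hsins | exact hgb | positivity
  refine step.trans (le_of_eq ?_)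
  rw [hK, hε]
  rw [Real.rpow_sub hθ0, Real.rpow_add hθ0, ← Real.rpow_natCast θ N,
    ← Real.rpow_natCast θ l]
  ring
end

section
/- Let (V, q) be a split nondegenerate quadratic space of dimension 2k over a field of characteristic ≠ 2, and let L, L' be maximal totally isotropic subspaces (dim L = dim L' = k). Then L and L' lie in the same SO(V)-orbit if and only if dim(L ∩ L') ≡ k (mod 2). In particular SO(V) has exactly two orbits on the set of maximal totally isotropic subspaces of V. -/
set_option linter.unusedSectionVars false
set_option maxHeartbeats 1000000

open Module Finset

section Aux
variable {K V : Type*} [Field K] [AddCommGroup V] [Module K V]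

theorem aux_surj_of_li {ι : Type*} [Fintype ι] [DecidableEq ι]
    {φ : ι → (V →ₗ[K] K)} (hφ : LinearIndependent K φ) :
    Function.Surjective (LinearMap.pi φ : V →ₗ[K] ι → K) := by
  rw [← LinearMap.range_eq_top]
  by_contra hne
  obtain ⟨ψ, hψ0, hker⟩ :=
    (LinearMap.range (LinearMap.pi φ)).exists_le_ker_of_lt_top (lt_top_iff_ne_top.mpr hne)
  have hψc : ∀ c : ι → K, ψ c = ∑ s, c s * ψ (Pi.single s 1) := by
    intro c
    conv_lhs => rw [← Finset.univ_sum_single c]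
    rw [map_sum]
    refine Finset.sum_congr rfl fun s _ => ?_
    have h1 : (Pi.single s (c s) : ι → K) = (c s) • (Pi.single s 1 : ι → K) := by
      ext t; by_cases h : t = s <;> simp [Pi.single_apply, h]
    rw [h1, map_smul, smul_eq_mul]
  have hcoef : ∀ s, ψ (Pi.single s 1) = 0 := by
    have hsum : (∑ s, ψ (Pi.single s 1) • φ s) = 0 := by
      refine LinearMap.ext fun v => ?_
      have h1 : ψ (LinearMap.pi φ v) = 0 := hker ⟨v, rfl⟩
      rw [hψc] at h1
      simpa [LinearMap.sum_apply, mul_comm] using h1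
    intro s
    exact linearIndependent_iff'.mp hφ Finset.univ _ hsum s (Finset.mem_univ s)
  refine hψ0 ?_
  refine LinearMap.ext fun c => ?_
  rw [hψc]
  simp [hcoef]

variable {Q : QuadraticForm K V}

theorem aux_polar_sum_left {ι : Type*} (s : Finset ι) (x : ι → V) (y : V) :
    QuadraticMap.polar Q (∑ i ∈ s, x i) y = ∑ i ∈ s, QuadraticMap.polar Q (x i) y := by
  simp only [← QuadraticMap.polarBilin_apply_apply, map_sum, LinearMap.coe_sum,
    Finset.sum_apply]

theorem aux_polar_sum_right {ι : Type*} (s : Finset ι) (x : V) (y : ι → V) :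
    QuadraticMap.polar Q x (∑ i ∈ s, y i) = ∑ i ∈ s, QuadraticMap.polar Q x (y i) := by
  simp only [← QuadraticMap.polarBilin_apply_apply, map_sum]

theorem aux_polar_isotropic {L : Submodule K V} (hiso : ∀ x ∈ L, Q x = 0)
    {x y : V} (hx : x ∈ L) (hy : y ∈ L) : QuadraticMap.polar Q x y = 0 := by
  rw [QuadraticMap.polar, hiso _ (add_mem hx hy), hiso _ hx, hiso _ hy]
  ring

variable [FiniteDimensional K V]

theorem aux_exists_dual (hQ : (QuadraticMap.polarBilin Q).Nondegenerate)
    {ι : Type*} [Fintype ι] [DecidableEq ι] {u : ι → V} (hu : LinearIndependent K u)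
    (c : ι → K) : ∃ w : V, ∀ s, QuadraticMap.polar Q (u s) w = c s := by
  have hli : LinearIndependent K (fun s => QuadraticMap.polarBilin Q (u s)) :=
    hu.map' (QuadraticMap.polarBilin Q)
      (LinearMap.separatingLeft_iff_ker_eq_bot.mp hQ.1)
  obtain ⟨w, hw⟩ := aux_surj_of_li hli c
  refine ⟨w, fun s => ?_⟩
  have := congrFun hw s
  simpa [LinearMap.pi_apply] using this

theorem aux_mem_of_perp (hQ : (QuadraticMap.polarBilin Q).Nondegenerate) {k : ℕ}
    (hdim : finrank K V = 2 * k) {L' : Submodule K V} (hL'dim : finrank K L' = k)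
    (hL'iso : ∀ x ∈ L', Q x = 0) {u : V}
    (hu : ∀ y ∈ L', QuadraticMap.polar Q u y = 0) : u ∈ L' := by
  classical
  let e' : Fin k → V := fun s => ((Module.finBasisOfFinrankEq K L' hL'dim) s : V)
  have he'li : LinearIndependent K e' :=
    ((Module.finBasisOfFinrankEq K L' hL'dim).linearIndependent).map' L'.subtype
      (Submodule.ker_subtype L')
  let Θ : V →ₗ[K] (Fin k → K) := LinearMap.pi fun s => QuadraticMap.polarBilin Q (e' s)
  have hsurj : Function.Surjective Θ := by
    refine aux_surj_of_li ?_
    exact he'li.map' (QuadraticMap.polarBilin Q)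
      (LinearMap.separatingLeft_iff_ker_eq_bot.mp hQ.1)
  have hrange : LinearMap.range Θ = ⊤ := LinearMap.range_eq_top.mpr hsurj
  have hkerdim : finrank K (LinearMap.ker Θ) = k := by
    have h1 := LinearMap.finrank_range_add_finrank_ker Θ
    rw [hrange, hdim] at h1
    have h2 : finrank K (⊤ : Submodule K (Fin k → K)) = k := by
      rw [finrank_top, Module.finrank_pi, Fintype.card_fin]
    omega
  have hle : L' ≤ LinearMap.ker Θ := by
    intro y hy
    rw [LinearMap.mem_ker]
    ext s
    have : e' s ∈ L' := by simp [e']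
    simpa [Θ, LinearMap.pi_apply] using aux_polar_isotropic hL'iso this hy
  have heq : L' = LinearMap.ker Θ :=
    Submodule.eq_of_le_of_finrank_le hle (by rw [hkerdim, hL'dim])
  rw [heq, LinearMap.mem_ker]
  ext s
  have : e' s ∈ L' := by simp [e']
  simpa [Θ, LinearMap.pi_apply] using
    (QuadraticMap.polar_comm Q (e' s) u).trans (hu _ this)

/-- Existence of a hyperbolic basis adapted to a pair of maximal totally
isotropic subspaces. -/
theorem aux_adapted (hchar : (2 : K) ≠ 0) (k : ℕ)
    (hdim : finrank K V = 2 * k)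
    (hQ : (QuadraticMap.polarBilin Q).Nondegenerate)
    (L L' : Submodule K V)
    (hLdim : finrank K L = k) (hLiso : ∀ x ∈ L, Q x = 0)
    (hL'dim : finrank K L' = k) (hL'iso : ∀ x ∈ L', Q x = 0) :
    ∃ (d m : ℕ), d + m = k ∧ d = finrank K ↥(L ⊓ L') ∧
      ∃ (e f : (Fin d ⊕ Fin m) → V),
        (∀ p, Q (e p) = 0) ∧ (∀ p, Q (f p) = 0) ∧
        (∀ p q, QuadraticMap.polar Q (e p) (e q) = 0) ∧
        (∀ p q, QuadraticMap.polar Q (f p) (f q) = 0) ∧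
        (∀ p q, QuadraticMap.polar Q (e p) (f q) = if p = q then 1 else 0) ∧
        Submodule.span K (Set.range e) = L ∧
        Submodule.span K
          (Set.range (Sum.elim (fun a => e (Sum.inl a)) (fun j => f (Sum.inr j)))) = L' := by
  classical
  set W : Submodule K V := L ⊓ L' with hWdef
  set W' : Submodule K ↥L := W.comap L.subtype with hW'def
  obtain ⟨C, hC⟩ := W'.exists_isCompl
  obtain ⟨d, hd⟩ : ∃ d, finrank K ↥W' = d := ⟨_, rfl⟩
  obtain ⟨m, hm⟩ : ∃ m, finrank K ↥C = m := ⟨_, rfl⟩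
  have hdW : d = finrank K ↥W := by
    rw [← hd]
    exact (Submodule.comapSubtypeEquivOfLe (inf_le_left : W ≤ L)).finrank_eq
  have hdm : d + m = k := by
    rw [← hd, ← hm, ← hLdim]
    exact Submodule.finrank_add_eq_of_isCompl hC
  set bw := Module.finBasisOfFinrankEq K ↥W' hd with hbw
  set bc := Module.finBasisOfFinrankEq K ↥C hm with hbc
  set vL : Fin d ⊕ Fin m → ↥L := Sum.elim (W'.subtype ∘ bw) (C.subtype ∘ bc) with hvL
  have hspan1 : Submodule.span K (Set.range (W'.subtype ∘ bw)) = W' := by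
    rw [Set.range_comp, Submodule.span_image, bw.span_eq, Submodule.map_top,
      Submodule.range_subtype]
  have hspan2 : Submodule.span K (Set.range (C.subtype ∘ bc)) = C := by
    rw [Set.range_comp, Submodule.span_image, bc.span_eq, Submodule.map_top,
      Submodule.range_subtype]
  have hvLli : LinearIndependent K vL := by
    refine LinearIndependent.sum_type ?_ ?_ ?_
    · exact bw.linearIndependent.map' W'.subtype (Submodule.ker_subtype _)
    · exact bc.linearIndependent.map' C.subtype (Submodule.ker_subtype _)
    · rw [hspan1, hspan2]; exact hC.disjoint
  have hvLspan : Submodule.span K (Set.range vL) = ⊤ := by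
    rw [hvL, Set.Sum.elim_range, Submodule.span_union, hspan1, hspan2]
    exact hC.sup_eq_top
  set e : Fin d ⊕ Fin m → V := fun p => ((vL p : ↥L) : V) with he
  have heli : LinearIndependent K e := hvLli.map' L.subtype (Submodule.ker_subtype L)
  have heL : Submodule.span K (Set.range e) = L := by
    have : e = L.subtype ∘ vL := rfl
    rw [this, Set.range_comp, Submodule.span_image, hvLspan, Submodule.map_top,
      Submodule.range_subtype]
  have hememL : ∀ p, e p ∈ L := fun p => (vL p).2
  have hememW : ∀ a, e (Sum.inl a) ∈ W := by
    intro a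
    have h1 : (bw a : ↥L) ∈ W' := Submodule.coe_mem (bw a)
    exact Submodule.mem_comap.mp h1
  have hee : ∀ p q, QuadraticMap.polar Q (e p) (e q) = 0 := fun p q =>
    aux_polar_isotropic hLiso (hememL p) (hememL q)
  have hQe : ∀ p, Q (e p) = 0 := fun p => hLiso _ (hememL p)
  have hWspan : Submodule.span K (Set.range fun a => e (Sum.inl a)) = W := by
    have h1 : (fun a => e (Sum.inl a)) = L.subtype ∘ (W'.subtype ∘ bw) := rfl
    rw [h1, Set.range_comp, Submodule.span_image, hspan1, hW'def,
      Submodule.map_comap_subtype]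
    exact inf_eq_right.mpr inf_le_left
  -- construction of the partners inside L' of the e (inr i)
  have hf2 : ∀ j : Fin m, ∃ w : V, w ∈ L' ∧
      ∀ i, QuadraticMap.polar Q (e (Sum.inr i)) w = if i = j then 1 else 0 := by
    intro j
    set φ : Fin m → (↥L' →ₗ[K] K) :=
      fun i => (QuadraticMap.polarBilin Q (e (Sum.inr i))).comp L'.subtype with hφ
    have hφli : LinearIndependent K φ := by
      rw [Fintype.linearIndependent_iff]
      intro lam hlam
      set u : V := ∑ i, lam i • e (Sum.inr i) with hu
      have hperp : ∀ y ∈ L', QuadraticMap.polar Q u y = 0 := by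
        intro y hy
        rw [hu, aux_polar_sum_left]
        have h3 := congrArg (fun ψ : ↥L' →ₗ[K] K => ψ ⟨y, hy⟩) hlam
        simp only [LinearMap.sum_apply, LinearMap.smul_apply, LinearMap.zero_apply,
          hφ, LinearMap.comp_apply, Submodule.coe_subtype, smul_eq_mul] at h3
        simpa [QuadraticMap.polar_smul_left, QuadraticMap.polarBilin_apply_apply] using h3
      have huL' : u ∈ L' := aux_mem_of_perp hQ hdim hL'dim hL'iso hperp
      have huL : u ∈ L := Submodule.sum_mem _ fun i _ =>
        Submodule.smul_mem _ _ (hememL (Sum.inr i))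
      have huW : u ∈ W := ⟨huL, huL'⟩
      rw [← hWspan] at huW
      obtain ⟨μ, hμ⟩ := (Submodule.mem_span_range_iff_exists_fun K).mp huW
      have hzero : ∑ p, (Sum.elim μ (fun i => - lam i)) p • e p = 0 := by
        rw [Fintype.sum_sum_type]
        simp only [Sum.elim_inl, Sum.elim_inr, neg_smul]
        rw [Finset.sum_neg_distrib, hμ, ← hu, add_neg_cancel]
      have := Fintype.linearIndependent_iff.mp heli _ hzero
      intro i
      have h2 := this (Sum.inr i)
      simpa using h2
    obtain ⟨w, hw⟩ := aux_surj_of_li hφli (fun i => if i = j then 1 else 0)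
    refine ⟨(w : V), w.2, fun i => ?_⟩
    have := congrFun hw i
    simpa [φ, LinearMap.pi_apply, QuadraticMap.polarBilin_apply_apply] using this
  choose f₂ hf₂L' hf₂pair using hf2
  have hQf₂ : ∀ j, Q (f₂ j) = 0 := fun j => hL'iso _ (hf₂L' j)
  have hf₂f₂ : ∀ i j, QuadraticMap.polar Q (f₂ i) (f₂ j) = 0 := fun i j =>
    aux_polar_isotropic hL'iso (hf₂L' i) (hf₂L' j)
  have hef₂ : ∀ p j, QuadraticMap.polar Q (e p) (f₂ j) = if p = Sum.inr j then 1 else 0 := by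
    rintro (a | i) j
    · have h1 : e (Sum.inl a) ∈ L' := (hememW a).2
      rw [aux_polar_isotropic hL'iso h1 (hf₂L' j)]
      simp
    · rw [hf₂pair j i]
      simp [Sum.inr.injEq]
  have hu2li : LinearIndependent K (Sum.elim e f₂) := by
    rw [Fintype.linearIndependent_iff]
    intro γ hγ
    rw [Fintype.sum_sum_type] at hγ
    simp only [Sum.elim_inl, Sum.elim_inr] at hγ
    have hγr : ∀ i, γ (Sum.inr i) = 0 := by
      intro i
      have h1 := congrArg (QuadraticMap.polar Q (e (Sum.inr i))) hγ
      rw [QuadraticMap.polar_add_right, aux_polar_sum_right, aux_polar_sum_right,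
        QuadraticMap.polar_zero_right] at h1
      simp only [QuadraticMap.polar_smul_right, hee, smul_zero, Finset.sum_const_zero,
        smul_eq_mul, zero_add] at h1
      have h2 : ∀ j, γ (Sum.inr j) * QuadraticMap.polar Q (e (Sum.inr i)) (f₂ j)
          = if j = i then γ (Sum.inr j) else 0 := by
        intro j
        rw [hf₂pair j i]
        by_cases h : i = j <;> simp [h, eq_comm]
      rw [Finset.sum_congr rfl (fun j _ => h2 j), Finset.sum_ite_eq' Finset.univ i] at h1
      simpa using h1
    have hγl : ∀ p, γ (Sum.inl p) = 0 := by
      have h1 : ∑ p, γ (Sum.inl p) • e p = 0 := by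
        rw [← hγ]
        simp [hγr]
      exact fun p => Fintype.linearIndependent_iff.mp heli _ h1 p
    rintro (p | i)
    · exact hγl p
    · exact hγr i
  have hgex : ∀ a : Fin d, ∃ w : V, ∀ s, QuadraticMap.polar Q (Sum.elim e f₂ s) w
      = if s = Sum.inl (Sum.inl a) then 1 else 0 :=
    fun a => aux_exists_dual hQ hu2li _
  choose g hg using hgex
  have hge : ∀ p a, QuadraticMap.polar Q (e p) (g a) = if p = Sum.inl a then 1 else 0 := by
    intro p a
    have h1 := hg a (Sum.inl p)
    simpa [Sum.inl.injEq] using h1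
  have hgf₂ : ∀ j a, QuadraticMap.polar Q (f₂ j) (g a) = 0 := by
    intro j a
    simpa using hg a (Sum.inr j)
  set corr : Fin d → V := fun a => Q (g a) • e (Sum.inl a)
      + ∑ b, (if b = a then 0 else 2⁻¹ * QuadraticMap.polar Q (g a) (g b)) • e (Sum.inl b)
    with hcorr
  have hcorrW : ∀ a, corr a ∈ W := fun a => Submodule.add_mem _
    (Submodule.smul_mem _ _ (hememW a))
    (Submodule.sum_mem _ fun b _ => Submodule.smul_mem _ _ (hememW b))
  have hrev : ∀ b a', QuadraticMap.polar Q (g a') (e (Sum.inl b)) = if b = a' then 1 else 0 := by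
    intro b a'
    rw [QuadraticMap.polar_comm]
    simpa [Sum.inl.injEq] using hge (Sum.inl b) a'
  have hg_corr : ∀ a' a, QuadraticMap.polar Q (g a') (corr a) =
      (if a' = a then Q (g a) else 0)
        + (if a' = a then 0 else 2⁻¹ * QuadraticMap.polar Q (g a) (g a')) := by
    intro a' a
    rw [hcorr]
    rw [QuadraticMap.polar_add_right, QuadraticMap.polar_smul_right, aux_polar_sum_right]
    simp only [QuadraticMap.polar_smul_right, hrev, smul_eq_mul, mul_ite, mul_one, mul_zero]
    rw [Finset.sum_ite_eq' Finset.univ a']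
    by_cases h : a' = a
    · subst h; simp
    · have h' : ¬ a = a' := fun hh => h hh.symm
      simp [h, h']
  have key : ∀ z w : V, Q (z + w) = Q z + Q w + QuadraticMap.polar Q z w := by
    intro z w; rw [QuadraticMap.polar]; ring
  set f₁ : Fin d → V := fun a => g a - corr a with hf₁
  have hQf₁ : ∀ a, Q (f₁ a) = 0 := by
    intro a
    have h1 : f₁ a = g a + (- corr a) := by rw [hf₁]; simp [sub_eq_add_neg]
    rw [h1, key, QuadraticMap.map_neg, hLiso _ ((hcorrW a).1),
      QuadraticMap.polar_neg_right, hg_corr]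
    simp
  have hef₁ : ∀ p a, QuadraticMap.polar Q (e p) (f₁ a) = if p = Sum.inl a then 1 else 0 := by
    intro p a
    rw [hf₁]
    simp only []
    rw [QuadraticMap.polar_sub_right, hge,
      aux_polar_isotropic hLiso (hememL p) ((hcorrW a).1), sub_zero]
  have hf₂f₁ : ∀ j a, QuadraticMap.polar Q (f₂ j) (f₁ a) = 0 := by
    intro j a
    rw [hf₁]
    simp only []
    rw [QuadraticMap.polar_sub_right, hgf₂,
      aux_polar_isotropic hL'iso (hf₂L' j) ((hcorrW a).2)]
    ring
  have hf₁f₁ : ∀ a b, QuadraticMap.polar Q (f₁ a) (f₁ b) = 0 := by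
    intro a b
    by_cases hab : a = b
    · subst hab
      rw [QuadraticMap.polar_self, hQf₁, smul_zero]
    · rw [hf₁]
      simp only []
      rw [QuadraticMap.polar_sub_right, QuadraticMap.polar_sub_left,
        QuadraticMap.polar_sub_left, hg_corr a b,
        QuadraticMap.polar_comm Q (corr a) (g b), hg_corr b a,
        aux_polar_isotropic hLiso ((hcorrW a).1) ((hcorrW b).1),
        QuadraticMap.polar_comm Q (g b) (g a)]
      have hba : ¬ (b = a) := fun h => hab h.symm
      simp only [hab, hba, if_false, if_true, zero_add, sub_zero]
      have h2 : (2⁻¹ : K) * 2 = 1 := inv_mul_cancel₀ hchar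
      linear_combination (-(QuadraticMap.polar Q (g a) (g b))) * h2
  refine ⟨d, m, hdm, hdW, e, Sum.elim f₁ f₂, hQe, ?_, hee, ?_, ?_, heL, ?_⟩
  · rintro (a | j)
    · exact hQf₁ a
    · exact hQf₂ j
  · rintro (a | j) (b | j')
    · exact hf₁f₁ a b
    · exact (QuadraticMap.polar_comm Q (f₁ a) (f₂ j')).trans (hf₂f₁ j' a)
    · exact hf₂f₁ j b
    · exact hf₂f₂ j j'
  · rintro p (a | j)
    · exact hef₁ p a
    · exact hef₂ p j
  · have hfeq : (Sum.elim (fun a => e (Sum.inl a)) (fun j => Sum.elim f₁ f₂ (Sum.inr j))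
        : Fin d ⊕ Fin m → V) = Sum.elim (fun a => e (Sum.inl a)) f₂ := by
      funext s; cases s <;> rfl
    rw [hfeq]
    set t : Fin d ⊕ Fin m → V := Sum.elim (fun a => e (Sum.inl a)) f₂ with ht
    have htle : Submodule.span K (Set.range t) ≤ L' := by
      rw [Submodule.span_le]
      rintro x ⟨(a | j), rfl⟩
      · exact (hememW a).2
      · exact hf₂L' j
    have htli : LinearIndependent K t := by
      rw [Fintype.linearIndependent_iff]
      intro γ hγ
      rw [Fintype.sum_sum_type] at hγ
      simp only [ht, Sum.elim_inl, Sum.elim_inr] at hγ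
      have hγr : ∀ i, γ (Sum.inr i) = 0 := by
        intro i
        have h1 := congrArg (QuadraticMap.polar Q (e (Sum.inr i))) hγ
        rw [QuadraticMap.polar_add_right, aux_polar_sum_right, aux_polar_sum_right,
          QuadraticMap.polar_zero_right] at h1
        simp only [QuadraticMap.polar_smul_right, hee, smul_zero, Finset.sum_const_zero,
          smul_eq_mul, zero_add] at h1
        have h2 : ∀ j, γ (Sum.inr j) * QuadraticMap.polar Q (e (Sum.inr i)) (f₂ j)
            = if j = i then γ (Sum.inr j) else 0 := by
          intro j
          rw [hf₂pair j i]
          by_cases h : i = j <;> simp [h, eq_comm]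
        rw [Finset.sum_congr rfl (fun j _ => h2 j), Finset.sum_ite_eq' Finset.univ i] at h1
        simpa using h1
      have hli2 : LinearIndependent K (fun a => e (Sum.inl a)) :=
        heli.comp Sum.inl Sum.inl_injective
      have hγl : ∀ a, γ (Sum.inl a) = 0 := by
        have h1 : ∑ a, γ (Sum.inl a) • e (Sum.inl a) = 0 := by
          rw [← hγ]
          simp [hγr]
        exact fun a => Fintype.linearIndependent_iff.mp hli2 _ h1 a
      rintro (a | i)
      · exact hγl a
      · exact hγr i
    have hcard : finrank K ↥(Submodule.span K (Set.range t)) = k := by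
      rw [finrank_span_eq_card htli]
      simp [hdm]
    exact Submodule.eq_of_le_of_finrank_le htle (by rw [hcard, hL'dim])

end Aux

theorem stmt13 {K V : Type*} [Field K] [AddCommGroup V] [Module K V]
    [FiniteDimensional K V] (hchar : (2 : K) ≠ 0) (k : ℕ)
    (hdim : Module.finrank K V = 2 * k)
    (Q : QuadraticForm K V)
    (hQ : (QuadraticMap.polarBilin Q).Nondegenerate)
    (L L' : Submodule K V)
    (hLdim : Module.finrank K L = k) (hLiso : ∀ x ∈ L, Q x = 0)
    (hL'dim : Module.finrank K L' = k) (hL'iso : ∀ x ∈ L', Q x = 0) :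
    (∃ f : V ≃ₗ[K] V, (∀ x, Q (f x) = Q x) ∧
        LinearMap.det (f : V →ₗ[K] V) = 1 ∧ L.map (f : V →ₗ[K] V) = L') ↔
      Module.finrank K ↥(L ⊓ L') % 2 = k % 2 := by
  classical
  rcases Nat.eq_zero_or_pos k with hk0 | hkpos
  · subst hk0
    have hV : Subsingleton V := by
      rw [Nat.mul_zero] at hdim
      exact Module.finrank_zero_iff.mp hdim
    have hLL' : L = L' := by
      ext x
      have hx0 : x = 0 := Subsingleton.elim x 0
      subst hx0; simp
    constructor
    · intro _
      have h1 : finrank K ↥(L ⊓ L') ≤ finrank K V := Submodule.finrank_le _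
      rw [Nat.mul_zero] at hdim
      omega
    · intro _
      refine ⟨LinearEquiv.refl K V, fun x => rfl, ?_, ?_⟩
      · rw [LinearEquiv.refl_toLinearMap, LinearMap.det_id]
      · rw [LinearEquiv.refl_toLinearMap, Submodule.map_id]
        exact hLL'
  obtain ⟨d, m, hdm, hdW, e, f, hQe, hQf, hee, hff, hef, heL, hfL'⟩ :=
    aux_adapted (Q := Q) hchar k hdim hQ L L' hLdim hLiso hL'dim hL'iso
  have hfe : ∀ p q, QuadraticMap.polar Q (f p) (e q) = if q = p then 1 else 0 := fun p q =>
    (QuadraticMap.polar_comm _ _ _).trans (hef q p)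
  set v : (Fin d ⊕ Fin m) ⊕ (Fin d ⊕ Fin m) → V := Sum.elim e f with hv
  have hvQ : ∀ P, Q (v P) = 0 := by rintro (p | p); exacts [hQe p, hQf p]
  have hememL : ∀ p, e p ∈ L := fun p => heL ▸ Submodule.subset_span ⟨p, rfl⟩
  -- linear independence of the union family
  have hvli : LinearIndependent K v := by
    rw [Fintype.linearIndependent_iff]
    intro γ hγ
    rw [Fintype.sum_sum_type] at hγ
    simp only [hv, Sum.elim_inl, Sum.elim_inr] at hγ
    have hl : ∀ q, γ (Sum.inl q) = 0 := by
      intro q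
      have h1 := congrArg (QuadraticMap.polar Q (f q)) hγ
      rw [QuadraticMap.polar_add_right, aux_polar_sum_right, aux_polar_sum_right,
        QuadraticMap.polar_zero_right] at h1
      simp only [QuadraticMap.polar_smul_right, hff, smul_zero, Finset.sum_const_zero,
        smul_eq_mul, add_zero] at h1
      have h2 : ∀ p, γ (Sum.inl p) * QuadraticMap.polar Q (f q) (e p)
          = if p = q then γ (Sum.inl p) else 0 := by
        intro p
        rw [hfe q p]
        by_cases h : p = q <;> simp [h, eq_comm]
      rw [Finset.sum_congr rfl (fun p _ => h2 p), Finset.sum_ite_eq' Finset.univ q] at h1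
      simpa using h1
    have hr : ∀ q, γ (Sum.inr q) = 0 := by
      intro q
      have h1 := congrArg (QuadraticMap.polar Q (e q)) hγ
      rw [QuadraticMap.polar_add_right, aux_polar_sum_right, aux_polar_sum_right,
        QuadraticMap.polar_zero_right] at h1
      simp only [QuadraticMap.polar_smul_right, hee, smul_zero, Finset.sum_const_zero,
        smul_eq_mul, zero_add] at h1
      have h2 : ∀ p, γ (Sum.inr p) * QuadraticMap.polar Q (e q) (f p)
          = if p = q then γ (Sum.inr p) else 0 := by
        intro p
        rw [hef q p]
        rcases eq_or_ne p q with h | h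
        · subst h; simp
        · simp [h, h.symm]
      rw [Finset.sum_congr rfl (fun p _ => h2 p), Finset.sum_ite_eq' Finset.univ q] at h1
      simpa using h1
    rintro (q | q); exacts [hl q, hr q]
  have hne : Nonempty ((Fin d ⊕ Fin m) ⊕ (Fin d ⊕ Fin m)) := by
    rcases Nat.eq_zero_or_pos d with hd0 | hdpos
    · have hm0 : 0 < m := by omega
      exact ⟨Sum.inl (Sum.inr ⟨0, hm0⟩)⟩
    · exact ⟨Sum.inl (Sum.inl ⟨0, hdpos⟩)⟩
  have hcard : Fintype.card ((Fin d ⊕ Fin m) ⊕ (Fin d ⊕ Fin m)) = finrank K V := by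
    simp only [Fintype.card_sum, Fintype.card_fin, hdim, ← hdm]
    ring
  set b := basisOfLinearIndependentOfCardEqFinrank hvli hcard with hbdef
  have hb : ⇑b = v := coe_basisOfLinearIndependentOfCardEqFinrank hvli hcard
  have hbv : ∀ P, b P = v P := congrFun hb
  set σ : Equiv.Perm ((Fin d ⊕ Fin m) ⊕ (Fin d ⊕ Fin m)) :=
    ⟨Sum.elim (Sum.elim (fun a => Sum.inl (Sum.inl a)) (fun i => Sum.inr (Sum.inr i)))
       (Sum.elim (fun a => Sum.inr (Sum.inl a)) (fun i => Sum.inl (Sum.inr i))),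
     Sum.elim (Sum.elim (fun a => Sum.inl (Sum.inl a)) (fun i => Sum.inr (Sum.inr i)))
       (Sum.elim (fun a => Sum.inr (Sum.inl a)) (fun i => Sum.inl (Sum.inr i))),
     by rintro ((a | i) | (a | i)) <;> rfl,
     by rintro ((a | i) | (a | i)) <;> rfl⟩ with hσ
  set g : V ≃ₗ[K] V := b.equiv b σ with hgdef
  have hgb : ∀ P, g (b P) = b (σ P) := by
    intro P
    simp [hgdef]
  have hgE : ∀ P, g (v P) = v (σ P) := by
    intro P; rw [← hbv P, hgb P, hbv]
  -- the four action facts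
  have hgea : ∀ a, g (e (Sum.inl a)) = e (Sum.inl a) := fun a => hgE (Sum.inl (Sum.inl a))
  have hgei : ∀ i, g (e (Sum.inr i)) = f (Sum.inr i) := fun i => hgE (Sum.inl (Sum.inr i))
  have hgfa : ∀ a, g (f (Sum.inl a)) = f (Sum.inl a) := fun a => hgE (Sum.inr (Sum.inl a))
  have hgfi : ∀ i, g (f (Sum.inr i)) = e (Sum.inr i) := fun i => hgE (Sum.inr (Sum.inr i))
  -- polar invariance of g
  have hBg : ∀ x y, QuadraticMap.polar Q (g x) (g y) = QuadraticMap.polar Q x y := by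
    have hB : ((QuadraticMap.polarBilin Q).compl₁₂ (g : V →ₗ[K] V) (g : V →ₗ[K] V))
        = QuadraticMap.polarBilin Q := by
      apply LinearMap.ext_basis b b
      intro P R
      simp only [LinearMap.compl₁₂_apply, QuadraticMap.polarBilin_apply_apply,
        LinearEquiv.coe_coe]
      rw [hgb P, hgb R, hbv, hbv, hbv, hbv]
      rcases P with ((a | i) | (a | i)) <;> rcases R with ((a' | j) | (a' | j)) <;>
        simp only [hσ, Equiv.coe_fn_mk, Sum.elim_inl, Sum.elim_inr, hv] <;>
        simp [hee, hff, hef, hfe, eq_comm]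
    intro x y
    have h1 := DFunLike.congr_fun (DFunLike.congr_fun hB x) y
    simpa only [LinearMap.compl₁₂_apply, QuadraticMap.polarBilin_apply_apply,
      LinearEquiv.coe_coe] using h1
  -- Q-invariance of g
  have key : ∀ z w : V, Q (z + w) = Q z + Q w + QuadraticMap.polar Q z w := fun z w => by
    rw [QuadraticMap.polar]; ring
  have hQg : ∀ x, Q (g x) = Q x := by
    have hDadd : ∀ x y, Q (g (x + y)) - Q (x + y) = (Q (g x) - Q x) + (Q (g y) - Q y) := by
      intro x y
      rw [map_add, key, key, hBg]
      ring
    set φD : V →+ K := AddMonoidHom.mk' (fun x => Q (g x) - Q x) hDadd with hφD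
    have hzero : ∀ x, φD x = 0 := by
      intro x
      have hx := b.sum_repr x
      rw [← hx, map_sum]
      refine Finset.sum_eq_zero fun P _ => ?_
      show Q (g (b.repr x P • b P)) - Q (b.repr x P • b P) = 0
      rw [map_smul, QuadraticMap.map_smul, QuadraticMap.map_smul, hgb, hbv, hbv, hvQ, hvQ]
      simp
    intro x
    have h1 := hzero x
    simp only [hφD, AddMonoidHom.mk'_apply] at h1
    exact sub_eq_zero.mp h1
  -- determinant of g
  set c : (Fin d ⊕ Fin m) ⊕ (Fin d ⊕ Fin m) → V := Sum.elim
      (Sum.elim (fun a => e (Sum.inl a)) (fun i => e (Sum.inr i) + f (Sum.inr i)))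
      (Sum.elim (fun a => f (Sum.inl a)) (fun i => e (Sum.inr i) - f (Sum.inr i))) with hc
  have hcin : ∀ P, c P ∈ Submodule.span K (Set.range c) := fun P =>
    Submodule.subset_span ⟨P, rfl⟩
  have hmemc : ∀ P, v P ∈ Submodule.span K (Set.range c) := by
    rintro ((a | i) | (a | i))
    · exact hcin (Sum.inl (Sum.inl a))
    · have h1 : v (Sum.inl (Sum.inr i)) = (2⁻¹ : K) •
          (c (Sum.inl (Sum.inr i)) + c (Sum.inr (Sum.inr i))) := by
        simp only [hc, hv, Sum.elim_inl, Sum.elim_inr]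
        rw [show (e (Sum.inr i) + f (Sum.inr i)) + (e (Sum.inr i) - f (Sum.inr i))
            = (2 : K) • e (Sum.inr i) by rw [two_smul]; abel]
        rw [smul_smul, inv_mul_cancel₀ hchar, one_smul]
      rw [h1]
      exact Submodule.smul_mem _ _ (Submodule.add_mem _ (hcin _) (hcin _))
    · exact hcin (Sum.inr (Sum.inl a))
    · have h1 : v (Sum.inr (Sum.inr i)) = (2⁻¹ : K) •
          (c (Sum.inl (Sum.inr i)) - c (Sum.inr (Sum.inr i))) := by
        simp only [hc, hv, Sum.elim_inl, Sum.elim_inr]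
        rw [show (e (Sum.inr i) + f (Sum.inr i)) - (e (Sum.inr i) - f (Sum.inr i))
            = (2 : K) • f (Sum.inr i) by rw [two_smul]; abel]
        rw [smul_smul, inv_mul_cancel₀ hchar, one_smul]
      rw [h1]
      exact Submodule.smul_mem _ _ (Submodule.sub_mem _ (hcin _) (hcin _))
  have htop : ⊤ ≤ Submodule.span K (Set.range c) := by
    have hspanv : Submodule.span K (Set.range v) = ⊤ := by
      rw [← hb]; exact b.span_eq
    rw [← hspanv, Submodule.span_le]
    rintro x ⟨P, rfl⟩
    exact hmemc P
  set cb := basisOfTopLeSpanOfCardEqFinrank c htop hcard with hcbdef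
  have hcb : ⇑cb = c := coe_basisOfTopLeSpanOfCardEqFinrank c htop hcard
  set δ : (Fin d ⊕ Fin m) ⊕ (Fin d ⊕ Fin m) → K := Sum.elim (fun _ => 1)
      (Sum.elim (fun _ => 1) (fun _ => -1)) with hδ
  have hgc : ∀ P, g (c P) = δ P • c P := by
    rintro ((a | i) | (a | i))
    · simp only [hc, hδ, Sum.elim_inl, Sum.elim_inr, one_smul]
      exact hgea a
    · simp only [hc, hδ, Sum.elim_inl, Sum.elim_inr, one_smul, map_add]
      rw [hgei i, hgfi i]
      abel
    · simp only [hc, hδ, Sum.elim_inl, Sum.elim_inr, one_smul]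
      exact hgfa a
    · simp only [hc, hδ, Sum.elim_inl, Sum.elim_inr, map_sub, neg_smul, one_smul]
      rw [hgei i, hgfi i]
      abel
  have hmat : LinearMap.toMatrix cb cb (g : V →ₗ[K] V) = Matrix.diagonal δ := by
    ext P R
    rw [LinearMap.toMatrix_apply]
    rw [show cb R = c R from congrFun hcb R]
    rw [LinearEquiv.coe_coe, hgc]
    rw [map_smul]
    rw [show c R = cb R from (congrFun hcb R).symm, Basis.repr_self]
    by_cases h : P = R
    · subst h
      simp [Matrix.diagonal_apply, Finsupp.single_apply]
    · simp [Matrix.diagonal_apply, Finsupp.single_apply, h, Ne.symm h]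
  have hdetg : LinearMap.det (g : V →ₗ[K] V) = (-1 : K)^m := by
    rw [← LinearMap.det_toMatrix cb, hmat, Matrix.det_diagonal]
    rw [Fintype.prod_sum_type]
    simp only [hδ, Sum.elim_inl, Sum.elim_inr]
    rw [Fintype.prod_sum_type]
    simp [Finset.prod_const, Finset.card_univ]
  -- g maps L to L'
  have hgL : L.map (g : V →ₗ[K] V) = L' := by
    rw [← heL, Submodule.map_span, ← Set.range_comp]
    have hcomp : ((g : V →ₗ[K] V) ∘ e)
        = Sum.elim (fun a => e (Sum.inl a)) (fun j => f (Sum.inr j)) := by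
      funext p
      rcases p with a | i
      · simpa using hgea a
      · simpa using hgei i
    rw [hcomp, hfL']
  constructor
  · -- hard direction
    rintro ⟨φ, hφQ, hφdet, hφL⟩
    set ψ : V ≃ₗ[K] V := φ.trans g.symm with hψdef
    have hcomp : (ψ : V →ₗ[K] V) = (g.symm : V →ₗ[K] V).comp (φ : V →ₗ[K] V) :=
      LinearMap.ext fun x => rfl
    have hginv : (g.symm : V →ₗ[K] V).comp (g : V →ₗ[K] V) = LinearMap.id := by
      ext x; simp
    have hψL : L.map (ψ : V →ₗ[K] V) = L := by
      rw [hcomp, Submodule.map_comp, hφL, ← hgL, ← Submodule.map_comp, hginv,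
        Submodule.map_id]
    have hψQ : ∀ x, Q (ψ x) = Q x := by
      intro x
      have h1 : Q (g (g.symm (φ x))) = Q (g.symm (φ x)) := hQg _
      rw [LinearEquiv.apply_symm_apply] at h1
      calc Q (ψ x) = Q (g.symm (φ x)) := rfl
      _ = Q (φ x) := h1.symm
      _ = Q x := hφQ x
    have hψB : ∀ x y, QuadraticMap.polar Q (ψ x) (ψ y) = QuadraticMap.polar Q x y := by
      intro x y
      rw [QuadraticMap.polar, QuadraticMap.polar, ← map_add, hψQ, hψQ, hψQ]
    set M := LinearMap.toMatrix b b (ψ : V →ₗ[K] V) with hM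
    have hrepr0 : ∀ x ∈ L, ∀ q, b.repr x (Sum.inr q) = 0 := by
      intro x hx q
      rw [← heL] at hx
      induction hx using Submodule.span_induction with
      | mem y hmem =>
        obtain ⟨p, rfl⟩ := hmem
        rw [show e p = b (Sum.inl p) from (hbv (Sum.inl p)).symm, Basis.repr_self]
        simp [Finsupp.single_apply]
      | zero => simp
      | add y z _ _ hy hz => simp [hy, hz]
      | smul a y _ hy => simp [hy]
    have hM21 : ∀ q p, M (Sum.inr q) (Sum.inl p) = 0 := by
      intro q p
      rw [hM, LinearMap.toMatrix_apply]
      refine hrepr0 _ ?_ q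
      have h1 : b (Sum.inl p) ∈ L := by rw [hbv]; exact hememL p
      rw [← hψL]
      exact Submodule.mem_map_of_mem h1
    have h0 : M.toBlocks₂₁ = 0 := by
      ext q p; exact hM21 q p
    have hdetM : M.det = M.toBlocks₁₁.det * M.toBlocks₂₂.det := by
      conv_lhs => rw [← Matrix.fromBlocks_toBlocks M, h0]
      exact Matrix.det_fromBlocks_zero₂₁ _ _ _
    -- orthogonality relation between blocks
    have hexp : ∀ (x y : V), QuadraticMap.polar Q x y
        = ∑ P, ∑ R, (b.repr x P * b.repr y R) * QuadraticMap.polar Q (b P) (b R) := by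
      intro x y
      conv_lhs => rw [← b.sum_repr x, ← b.sum_repr y]
      rw [aux_polar_sum_left]
      refine Finset.sum_congr rfl fun P _ => ?_
      rw [QuadraticMap.polar_smul_left, aux_polar_sum_right, Finset.smul_sum]
      refine Finset.sum_congr rfl fun R _ => ?_
      rw [QuadraticMap.polar_smul_right]
      simp only [smul_eq_mul]
      ring
    have hgramb : ∀ s t, QuadraticMap.polar Q (b (Sum.inl s)) (b (Sum.inl t)) = 0 := by
      intro s t; rw [hbv, hbv]; exact hee s t
    have hgramb2 : ∀ s t, QuadraticMap.polar Q (b (Sum.inl s)) (b (Sum.inr t))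
        = if s = t then 1 else 0 := by
      intro s t; rw [hbv, hbv]; exact hef s t
    have hMe : ∀ i P, b.repr (ψ (e i)) P = M P (Sum.inl i) := by
      intro i P
      rw [hM, LinearMap.toMatrix_apply, LinearEquiv.coe_coe, hbv]
      simp only [hv, Sum.elim_inl]
    have hMf : ∀ j P, b.repr (ψ (f j)) P = M P (Sum.inr j) := by
      intro j P
      rw [hM, LinearMap.toMatrix_apply, LinearEquiv.coe_coe, hbv]
      simp only [hv, Sum.elim_inr]
    have hAD : M.toBlocks₁₁.transpose * M.toBlocks₂₂ = 1 := by
      ext i j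
      have hpair : QuadraticMap.polar Q (ψ (e i)) (ψ (f j)) = if i = j then 1 else 0 := by
        rw [hψB, hef]
      rw [hexp] at hpair
      simp only [hMe, hMf] at hpair
      rw [Fintype.sum_sum_type] at hpair
      have hzero2 : ∀ s : Fin d ⊕ Fin m,
          (∑ R, M (Sum.inr s) (Sum.inl i) * M R (Sum.inr j)
            * QuadraticMap.polar Q (b (Sum.inr s)) (b R)) = 0 := by
        intro s
        refine Finset.sum_eq_zero fun R _ => ?_
        rw [hM21]
        ring
      have hmain : ∀ s : Fin d ⊕ Fin m,
          (∑ R, M (Sum.inl s) (Sum.inl i) * M R (Sum.inr j)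
            * QuadraticMap.polar Q (b (Sum.inl s)) (b R))
          = M (Sum.inl s) (Sum.inl i) * M (Sum.inr s) (Sum.inr j) := by
        intro s
        rw [Fintype.sum_sum_type]
        have hz : (∑ t : Fin d ⊕ Fin m, M (Sum.inl s) (Sum.inl i) * M (Sum.inl t) (Sum.inr j)
            * QuadraticMap.polar Q (b (Sum.inl s)) (b (Sum.inl t))) = 0 := by
          refine Finset.sum_eq_zero fun t _ => ?_
          rw [hgramb]; ring
        rw [hz, zero_add]
        have h2 : ∀ t : Fin d ⊕ Fin m, M (Sum.inl s) (Sum.inl i) * M (Sum.inr t) (Sum.inr j)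
            * QuadraticMap.polar Q (b (Sum.inl s)) (b (Sum.inr t))
            = if t = s then M (Sum.inl s) (Sum.inl i) * M (Sum.inr t) (Sum.inr j) else 0 := by
          intro t
          rw [hgramb2]
          by_cases h : s = t
          · subst h; simp
          · simp [h, Ne.symm h]
        rw [Finset.sum_congr rfl (fun t _ => h2 t), Finset.sum_ite_eq' Finset.univ s]
        simp
      have hsum1 : (∑ s : Fin d ⊕ Fin m, ∑ R, M (Sum.inl s) (Sum.inl i) * M R (Sum.inr j)
          * QuadraticMap.polar Q (b (Sum.inl s)) (b R))
          = ∑ s : Fin d ⊕ Fin m, M (Sum.inl s) (Sum.inl i) * M (Sum.inr s) (Sum.inr j) :=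
        Finset.sum_congr rfl fun s _ => hmain s
      rw [hsum1] at hpair
      simp only [hzero2, Finset.sum_const_zero, add_zero] at hpair
      rw [Matrix.mul_apply, Matrix.one_apply]
      simpa [Matrix.transpose_apply, Matrix.toBlocks₁₁, Matrix.toBlocks₂₂] using hpair
    have hdet1 : LinearMap.det (ψ : V →ₗ[K] V) = 1 := by
      rw [← LinearMap.det_toMatrix b, ← hM, hdetM]
      have h1 := congrArg Matrix.det hAD
      rw [Matrix.det_mul, Matrix.det_transpose, Matrix.det_one] at h1
      exact h1
    have hdetgsymm : LinearMap.det (g.symm : V →ₗ[K] V) * LinearMap.det (g : V →ₗ[K] V) = 1 := by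
      rw [← LinearMap.det_comp, hginv, LinearMap.det_id]
    have hm1 : ((-1 : K))^m = 1 := by
      have h2 : LinearMap.det (ψ : V →ₗ[K] V)
          = LinearMap.det (g.symm : V →ₗ[K] V) * LinearMap.det (φ : V →ₗ[K] V) := by
        rw [hcomp, LinearMap.det_comp]
      rw [hdet1, hφdet, mul_one] at h2
      rw [← h2, one_mul] at hdetgsymm
      rw [← hdetg]
      exact hdetgsymm
    have hmeven : m % 2 = 0 := by
      by_contra hodd
      have hoddm : Odd m := Nat.odd_iff.mpr (by omega)
      rw [hoddm.neg_one_pow] at hm1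
      have h2 : (2 : K) = 0 := by linear_combination -hm1
      exact hchar h2
    rw [← hdW]
    omega
  · intro hpar
    rw [← hdW] at hpar
    have hmeven : Even m := Nat.even_iff.mpr (by omega)
    refine ⟨g, hQg, ?_, hgL⟩
    rw [hdetg]
    exact hmeven.neg_one_pow
end
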